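/- The shadow map of the autonomous d₄P^(I) map preserves the quintic invariant Δ₅: for all a, b, c, d, x, y, z, u, x₁ in ℂ with x ≠ 0, if x·x₁ = yz + z² + zu − x² − xy, then Δ₅(x₁, x, y, z) = Δ₅(x, y, z, u). -/
import Mathlib


/-- The quintic invariant `Δ₅` of the autonomous `d₄P^(I)` map, in affine coordinates. -/
noncomputable def Δ₅ (a b c d x y z u : ℂ) : ℂ :=
  a * y * z * (z*u + x*y + y^2 + 2*y*z + z^2) * (x + y + z + u)
    + b * y * z * (x + y + z) * (u + y + z)
    + c * y * z * (x + y + z + u)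
    - d * (z*u + x*y + y^2 + 2*y*z + z^2)

/-- The shadow map `φ_s^(I)` of the autonomous `d₄P^(I)` map preserves the quintic
invariant `Δ₅`. -/
theorem d4PI_shadow_preserves_Delta5 (a b c d x y z u x₁ : ℂ) (h : x ≠ 0)
    (hrec : x * x₁ = y*z + z^2 + z*u - x^2 - x*y) :
    Δ₅ a b c d x₁ x y z = Δ₅ a b c d x y z u := by
  have hx1 : x₁ = (y*z + z^2 + z*u - x^2 - x*y) / x := by
    field_simp
    linear_combination hrec
  subst hx1
  simp only [Δ₅]
  field_simp
  ring
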